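/- Let d ≥ 2 and h > 0. No h-free time minimizer of the Newtonian N-body problem is superhyperbolic: every h-free time minimizer γ : [0,∞) → E^N satisfies limsup_{t→∞} R(t)/t < ∞, where R(t) = max_{i<j} ‖γ_i(t) − γ_j(t)‖. -/

import Mathlib

open MeasureTheory Filter Topology Asymptotics
open scoped BigOperators

noncomputable section

/-- Configuration space of `N` point masses in the Euclidean space `E = ℝ^d`. -/
abbrev Config (d N : ℕ) := Fin N → EuclideanSpace ℝ (Fin d)

/-- Kinetic energy `T(v) = (1/2) Σ_i m_i ‖v_i‖²`. -/
def kineticEnergy (d N : ℕ) (m : Fin N → ℝ) (v : Config d N) : ℝ :=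
  (1 / 2) * ∑ i, m i * ‖v i‖ ^ 2

/-- Newtonian potential `U(x) = Σ_{i<j} G m_i m_j / ‖x_i − x_j‖`. -/
def potentialEnergy (d N : ℕ) (G : ℝ) (m : Fin N → ℝ) (x : Config d N) : ℝ :=
  ∑ i : Fin N, ∑ j : Fin N, if i < j then G * m i * m j / ‖x i - x j‖ else 0

/-- Lagrangian `L(x,v) = T(v) + U(x)`. -/
def lagrangian (d N : ℕ) (G : ℝ) (m : Fin N → ℝ) (x v : Config d N) : ℝ :=
  kineticEnergy d N m v + potentialEnergy d N G m x

/-- `γ` is absolutely continuous on `[a,b]` with a.e. derivative `g`: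
`γ t = γ a + ∫_a^t g`. -/
structure ACOn (d N : ℕ) (γ g : ℝ → Config d N) (a b : ℝ) : Prop where
  integrable : IntervalIntegrable g volume a b
  eq : ∀ t ∈ Set.Icc a b, γ t = γ a + ∫ s in a..t, g s

/-- Fixed-time action potential `φ_h(x, x', τ)`: infimum of `A_{L+h}` over absolutely
continuous curves from `x` to `x'` in time `τ` (with integrable Lagrangian). -/
def phiTimed (d N : ℕ) (G : ℝ) (m : Fin N → ℝ) (h : ℝ) (x x' : Config d N) (τ : ℝ) : ℝ :=
  sInf { c : ℝ | ∃ γ g : ℝ → Config d N, ACOn d N γ g 0 τ ∧ γ 0 = x ∧ γ τ = x' ∧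
    IntervalIntegrable (fun t => lagrangian d N G m (γ t) (g t) + h) volume 0 τ ∧
    c = ∫ t in (0:ℝ)..τ, (lagrangian d N G m (γ t) (g t) + h) }

/-- Free-time action potential `φ_h(x, x') = inf_{τ>0} φ_h(x, x', τ)`. -/
def phiFree (d N : ℕ) (G : ℝ) (m : Fin N → ℝ) (h : ℝ) (x x' : Config d N) : ℝ :=
  sInf { c : ℝ | ∃ τ : ℝ, 0 < τ ∧ c = phiTimed d N G m h x x' τ }

/-- `γ` (with a.e. derivative `g`) is an `h`-free time minimizer:
`A_{L+h}(γ|_{[t,t+τ]}) = φ_h(γ(t), γ(t+τ))` for all `t ≥ 0`, `τ > 0`. -/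
def IsFTM (d N : ℕ) (G : ℝ) (m : Fin N → ℝ) (h : ℝ) (γ g : ℝ → Config d N) : Prop :=
  ∀ t : ℝ, 0 ≤ t → ∀ τ : ℝ, 0 < τ →
    ACOn d N γ g t (t + τ) ∧
    IntervalIntegrable (fun s => lagrangian d N G m (γ s) (g s) + h) volume t (t + τ) ∧
    (∫ s in t..t + τ, (lagrangian d N G m (γ s) (g s) + h)) =
      phiFree d N G m h (γ t) (γ (t + τ))

/-- `f(t) ≈ g(t)`: there are `0 < c ≤ C` and `t₀` with `c g(t) ≤ f(t) ≤ C g(t)` for `t ≥ t₀`. -/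
def SameGrowth (f g : ℝ → ℝ) : Prop :=
  ∃ c C t₀ : ℝ, 0 < c ∧ c ≤ C ∧ ∀ t ≥ t₀, c * g t ≤ f t ∧ f t ≤ C * g t

/-- Total mass of the cluster `A`. -/
def clusterMass (N : ℕ) (m : Fin N → ℝ) (A : Finset (Fin N)) : ℝ := ∑ i ∈ A, m i

/-- Center of mass of the cluster `A` in the configuration `x`. -/
def clusterCenter (d N : ℕ) (m : Fin N → ℝ) (A : Finset (Fin N)) (x : Config d N) :
    EuclideanSpace ℝ (Fin d) :=
  (clusterMass N m A)⁻¹ • ∑ i ∈ A, m i • x i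

/-- Internal potential `U_A` of the cluster `A`. -/
def clusterPotential (d N : ℕ) (G : ℝ) (m : Fin N → ℝ) (A : Finset (Fin N))
    (x : Config d N) : ℝ :=
  ∑ i ∈ A, ∑ j ∈ A, if i < j then G * m i * m j / ‖x i - x j‖ else 0

/-- Sum of the internal cluster potentials of the partition `P`. -/
def internalPotential (d N : ℕ) (G : ℝ) (m : Fin N → ℝ)
    (P : Finpartition (Finset.univ : Finset (Fin N))) (x : Config d N) : ℝ :=
  ∑ A ∈ P.parts, clusterPotential d N G m A x

/-- Interaction potential between distinct clusters of the partition `P`. -/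
def interactionDensity (d N : ℕ) (G : ℝ) (m : Fin N → ℝ)
    (P : Finpartition (Finset.univ : Finset (Fin N))) (x : Config d N) : ℝ :=
  ∑ i : Fin N, ∑ j : Fin N,
    if i < j ∧ ∀ A ∈ P.parts, ¬(i ∈ A ∧ j ∈ A) then G * m i * m j / ‖x i - x j‖ else 0

/-- Lagrangian with no interaction term. -/
def lagrangianI0 (d N : ℕ) (G : ℝ) (m : Fin N → ℝ)
    (P : Finpartition (Finset.univ : Finset (Fin N))) (x v : Config d N) : ℝ :=
  kineticEnergy d N m v + internalPotential d N G m P x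

/-- Fixed-time action potential with no interaction term `φ_{h,I=0}(x, x', τ)`. -/
def phiI0Timed (d N : ℕ) (G : ℝ) (m : Fin N → ℝ)
    (P : Finpartition (Finset.univ : Finset (Fin N))) (h : ℝ) (x x' : Config d N)
    (τ : ℝ) : ℝ :=
  sInf { c : ℝ | ∃ γ g : ℝ → Config d N, ACOn d N γ g 0 τ ∧ γ 0 = x ∧ γ τ = x' ∧
    IntervalIntegrable (fun t => lagrangianI0 d N G m P (γ t) (g t) + h) volume 0 τ ∧
    c = ∫ t in (0:ℝ)..τ, (lagrangianI0 d N G m P (γ t) (g t) + h) }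

/-- Free-time action potential with no interaction term `φ_{h,I=0}(x, x')`. -/
def phiI0Free (d N : ℕ) (G : ℝ) (m : Fin N → ℝ)
    (P : Finpartition (Finset.univ : Finset (Fin N))) (h : ℝ) (x x' : Config d N) : ℝ :=
  sInf { c : ℝ | ∃ τ : ℝ, 0 < τ ∧ c = phiI0Timed d N G m P h x x' τ }

/-- Squared mass norm of the difference of the cluster centers of mass:
`‖y − y'‖² = Σ_{A∈P} M_A ‖y_A − y'_A‖²`. -/
def massNormSqCenters (d N : ℕ) (m : Fin N → ℝ)
    (P : Finpartition (Finset.univ : Finset (Fin N))) (x x' : Config d N) : ℝ :=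
  ∑ A ∈ P.parts, clusterMass N m A * ‖clusterCenter d N m A x - clusterCenter d N m A x'‖ ^ 2

/-- Mass-norm distance `‖z_A − z'_A‖` between the relative configurations of the cluster `A`. -/
def relConfigDist (d N : ℕ) (m : Fin N → ℝ) (A : Finset (Fin N)) (x x' : Config d N) : ℝ :=
  Real.sqrt (∑ i ∈ A,
    m i * ‖(x i - clusterCenter d N m A x) - (x' i - clusterCenter d N m A x')‖ ^ 2)

/-- Newtonian acceleration of the body `i` in the configuration `x`:
`x_i'' = Σ_{j≠i} G m_j (x_j − x_i)/‖x_j − x_i‖³`. -/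
def accel (d N : ℕ) (G : ℝ) (m : Fin N → ℝ) (x : Config d N) (i : Fin N) :
    EuclideanSpace ℝ (Fin d) :=
  ∑ j ∈ Finset.univ.erase i, (G * m j / ‖x j - x i‖ ^ 3) • (x j - x i)

/-- `γ`, with velocity curve `v`, is a collision-free solution of Newton's equations on `s`. -/
def IsMotionWithOn (d N : ℕ) (G : ℝ) (m : Fin N → ℝ) (γ v : ℝ → Config d N)
    (s : Set ℝ) : Prop :=
  ∀ t ∈ s, (∀ i j : Fin N, i ≠ j → γ t i ≠ γ t j) ∧
    ∀ i : Fin N, HasDerivAt (fun u => γ u i) (v t i) t ∧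
      HasDerivAt (fun u => v u i) (accel d N G m (γ t) i) t

/-- `γ` is a motion (collision-free solution of Newton's equations) on `s`. -/
def IsMotionOn (d N : ℕ) (G : ℝ) (m : Fin N → ℝ) (γ : ℝ → Config d N) (s : Set ℝ) : Prop :=
  ∃ v : ℝ → Config d N, IsMotionWithOn d N G m γ v s

/-- The motion is superhyperbolic: `limsup_{t→∞} R(t)/t = +∞`. -/
def Superhyperbolic (d N : ℕ) (γ : ℝ → Config d N) : Prop :=
  ∀ C t₀ : ℝ, ∃ t ≥ t₀, ∃ i j : Fin N, C * t < ‖γ t i - γ t j‖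

/-- Cluster fixed-time action potential `φ_A(z, z', τ)`. -/
def phiCluster (d N : ℕ) (G : ℝ) (m : Fin N → ℝ) (A : Finset (Fin N))
    (z z' : Config d N) (τ : ℝ) : ℝ :=
  sInf { c : ℝ | ∃ γ g : ℝ → Config d N, ACOn d N γ g 0 τ ∧
    (∀ i ∈ A, γ 0 i = z i) ∧ (∀ i ∈ A, γ τ i = z' i) ∧
    IntervalIntegrable (fun t => (1 / 2) * ∑ i ∈ A, m i * ‖g t i‖ ^ 2 +
      clusterPotential d N G m A (γ t)) volume 0 τ ∧
    c = ∫ t in (0:ℝ)..τ, ((1 / 2) * ∑ i ∈ A, m i * ‖g t i‖ ^ 2 +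
      clusterPotential d N G m A (γ t)) }

end

/-!
The free-time action potential grows at most linearly:
`φ_h(x, y) ≤ Λ (1 + Σ ‖x_i‖ + Σ ‖y_i‖)`. Indeed `x` can be joined to `y` by a curve whose duration
and action are linear in `P = 1 + Σ ‖x_i‖ + Σ ‖y_i‖`: spread the bodies apart along a first axis in
the order of their coordinates on that axis, along the profile `t ^ (2/3)`, which keeps both the
kinetic and the potential term integrable even when `x` has collisions; shift them apart by index
along a second axis (this is where `d ≥ 2` enters); move in a straight line to the corresponding
configuration built from `y`; and undo the last two moves for `y`. Every straight leg keeps all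
mutual distances at least `1`.

Conversely, Young's inequality `μ ‖v‖ - μ² / (2 m) ≤ m ‖v‖² / 2` bounds the action of any curve on
`[0, t]` from below by `μ Σ ‖γ_i(t) - γ_i(0)‖ - C t`. For a free time minimizer this action equals
`φ_h(γ(0), γ(t))`, so taking `μ = Λ + 1` gives `Σ ‖γ_i(t)‖ ≤ A + B t`, hence
`‖γ_i(t) - γ_j(t)‖ = O(t)`.
-/

open Set

section Glue

variable {E : Type*}

noncomputable def glue (τ : ℝ) (f₁ f₂ : ℝ → E) (t : ℝ) : E := if t ≤ τ then f₁ t else f₂ (t - τ)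

lemma glue_of_le {τ t : ℝ} (f₁ f₂ : ℝ → E) (ht : t ≤ τ) : glue τ f₁ f₂ t = f₁ t := if_pos ht

lemma glue_of_lt {τ t : ℝ} (f₁ f₂ : ℝ → E) (ht : τ < t) : glue τ f₁ f₂ t = f₂ (t - τ) :=
  if_neg ht.not_ge

variable [NormedAddCommGroup E] {τ s : ℝ} {f₁ f₂ : ℝ → E}

lemma IntervalIntegrable.glue_left (hτ : 0 ≤ τ) (hf₁ : IntervalIntegrable f₁ volume 0 τ) :
    IntervalIntegrable (glue τ f₁ f₂) volume 0 τ := by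
  refine (intervalIntegrable_congr fun u hu => ?_).1 hf₁
  rw [uIoc_of_le hτ] at hu
  exact (glue_of_le f₁ f₂ hu.2).symm

lemma IntervalIntegrable.glue_right (hs : 0 ≤ s) (hf₂ : IntervalIntegrable f₂ volume 0 s) :
    IntervalIntegrable (glue τ f₁ f₂) volume τ (τ + s) := by
  have := hf₂.comp_sub_right τ
  rw [zero_add, add_comm] at this
  refine (intervalIntegrable_congr fun u hu => ?_).1 this
  rw [uIoc_of_le (by linarith)] at hu
  exact (glue_of_lt f₁ f₂ hu.1).symm

variable [NormedSpace ℝ E]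

lemma integral_glue_of_le {t : ℝ} (ht₀ : 0 ≤ t) (ht : t ≤ τ) :
    ∫ u in (0:ℝ)..t, glue τ f₁ f₂ u = ∫ u in (0:ℝ)..t, f₁ u := by
  refine intervalIntegral.integral_congr fun u hu => ?_
  rw [uIcc_of_le ht₀] at hu
  exact glue_of_le f₁ f₂ (hu.2.trans ht)

lemma integral_glue (hτ : 0 ≤ τ) (hs : 0 ≤ s) (hf₁ : IntervalIntegrable f₁ volume 0 τ)
    (hf₂ : IntervalIntegrable f₂ volume 0 s) :
    ∫ u in (0:ℝ)..τ + s, glue τ f₁ f₂ u = (∫ u in (0:ℝ)..τ, f₁ u) + ∫ u in (0:ℝ)..s, f₂ u := by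
  rw [← intervalIntegral.integral_add_adjacent_intervals (hf₁.glue_left hτ) (hf₂.glue_right hs),
    integral_glue_of_le hτ le_rfl]
  congr 1
  calc ∫ u in τ..τ + s, glue τ f₁ f₂ u = ∫ u in τ..τ + s, f₂ (u - τ) := by
        refine intervalIntegral.integral_congr_ae (Filter.Eventually.of_forall fun u hu => ?_)
        rw [uIoc_of_le (by linarith)] at hu
        exact glue_of_lt f₁ f₂ hu.1
    _ = ∫ u in (0:ℝ)..s, f₂ u := by
        rw [intervalIntegral.integral_comp_sub_right, sub_self, add_sub_cancel_left]

end Glue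

section Energy

variable {d N : ℕ} {G : ℝ} {m : Fin N → ℝ}

lemma kineticEnergy_neg (v : Config d N) : kineticEnergy d N m (-v) = kineticEnergy d N m v := by
  simp [kineticEnergy]

lemma kineticEnergy_nonneg (hm : ∀ i, 0 ≤ m i) (v : Config d N) : 0 ≤ kineticEnergy d N m v :=
  mul_nonneg (by norm_num) (Finset.sum_nonneg fun i _ => mul_nonneg (hm i) (sq_nonneg _))

lemma potentialEnergy_nonneg (hG : 0 ≤ G) (hm : ∀ i, 0 ≤ m i) (x : Config d N) :
    0 ≤ potentialEnergy d N G m x := by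
  refine Finset.sum_nonneg fun i _ => Finset.sum_nonneg fun j _ => ?_
  split_ifs
  · have := hm i; have := hm j; positivity
  · exact le_rfl

lemma lagrangian_nonneg (hG : 0 ≤ G) (hm : ∀ i, 0 ≤ m i) (x v : Config d N) :
    0 ≤ lagrangian d N G m x v :=
  add_nonneg (kineticEnergy_nonneg hm v) (potentialEnergy_nonneg hG hm x)

lemma kineticEnergy_le (hm : ∀ i, 0 ≤ m i) {v : Config d N} {V : ℝ} (hv : ∀ i, ‖v i‖ ≤ V) :
    kineticEnergy d N m v ≤ (∑ i, m i) * V ^ 2 / 2 := by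
  rw [kineticEnergy, Finset.sum_mul]
  have : ∀ i, m i * ‖v i‖ ^ 2 ≤ m i * V ^ 2 := fun i =>
    mul_le_mul_of_nonneg_left (pow_le_pow_left₀ (norm_nonneg _) (hv i) 2) (hm i)
  linarith [Finset.sum_le_sum fun i (_ : i ∈ Finset.univ) => this i]

lemma potentialEnergy_le (hG : 0 ≤ G) (hm : ∀ i, 0 ≤ m i) {x : Config d N} {δ : ℝ} (hδ : 0 < δ)
    (hsep : ∀ i j, i ≠ j → δ ≤ ‖x i - x j‖) :
    potentialEnergy d N G m x ≤ G * (∑ i, m i) ^ 2 / δ := by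
  have hterm : ∀ i j, (if i < j then G * m i * m j / ‖x i - x j‖ else 0) ≤ G * m i * m j / δ := by
    intro i j
    have hGm : 0 ≤ G * m i * m j := by have := hm i; have := hm j; positivity
    split_ifs with hij
    · exact div_le_div_of_nonneg_left hGm hδ (hsep i j hij.ne)
    · positivity
  calc potentialEnergy d N G m x ≤ ∑ i, ∑ j, G * m i * m j / δ :=
        Finset.sum_le_sum fun i _ => Finset.sum_le_sum fun j _ => hterm i j
    _ = G * (∑ i, m i) ^ 2 / δ := by
        rw [sq, Finset.sum_mul_sum, Finset.mul_sum, Finset.sum_div]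
        refine Finset.sum_congr rfl fun i _ => ?_
        rw [Finset.mul_sum, Finset.sum_div]
        exact Finset.sum_congr rfl fun j _ => by ring

lemma Measurable.lagrangian {γ g : ℝ → Config d N} (hγ : Measurable γ) (hg : Measurable g) :
    Measurable fun t => lagrangian d N G m (γ t) (g t) := by
  unfold _root_.lagrangian kineticEnergy potentialEnergy
  refine Measurable.add (by fun_prop)
    (Finset.measurable_sum _ fun i _ => Finset.measurable_sum _ fun j _ => ?_)
  by_cases hij : i < j <;> simp only [hij, if_true, if_false] <;> fun_prop

end Energy

section Reachable

variable {d N : ℕ} {G h : ℝ} {m : Fin N → ℝ}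

lemma ACOn.glue {γ₁ g₁ γ₂ g₂ : ℝ → Config d N} {τ₁ τ₂ : ℝ} (hτ₁ : 0 ≤ τ₁) (hτ₂ : 0 ≤ τ₂)
    (h₁ : ACOn d N γ₁ g₁ 0 τ₁) (h₂ : ACOn d N γ₂ g₂ 0 τ₂) (hjoin : γ₁ τ₁ = γ₂ 0) :
    ACOn d N (glue τ₁ γ₁ γ₂) (glue τ₁ g₁ g₂) 0 (τ₁ + τ₂) := by
  refine ⟨(h₁.integrable.glue_left hτ₁).trans (h₂.integrable.glue_right hτ₂), fun t ht => ?_⟩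
  rw [glue_of_le γ₁ γ₂ hτ₁]
  rcases le_or_gt t τ₁ with htτ | htτ
  · rw [glue_of_le γ₁ γ₂ htτ, integral_glue_of_le ht.1 htτ]
    exact h₁.eq t ⟨ht.1, htτ⟩
  · have hs : t - τ₁ ∈ Icc 0 τ₂ := ⟨by linarith, by linarith [ht.2]⟩
    have hI₂ : IntervalIntegrable g₂ volume 0 (t - τ₁) :=
      h₂.integrable.mono_set (uIcc_subset_uIcc_left (by simp [uIcc_of_le hτ₂, hs.1, hs.2]))
    rw [glue_of_lt γ₁ γ₂ htτ, ← add_sub_cancel τ₁ t, integral_glue hτ₁ hs.1 h₁.integrable hI₂,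
      add_sub_cancel_left, h₂.eq _ hs, ← hjoin, h₁.eq τ₁ ⟨hτ₁, le_rfl⟩, add_assoc]

lemma ACOn.reverse {γ g : ℝ → Config d N} {τ : ℝ} (hτ : 0 ≤ τ) (hγ : ACOn d N γ g 0 τ) :
    ACOn d N (fun t => γ (τ - t)) (fun t => -g (τ - t)) 0 τ := by
  have hI : IntervalIntegrable (fun t => g (τ - t)) volume 0 τ := by
    simpa using (hγ.integrable.comp_sub_left τ).symm
  refine ⟨hI.neg, fun t ht => ?_⟩
  have hsub : τ - t ∈ Icc 0 τ := ⟨by linarith [ht.2], by linarith [ht.1]⟩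
  rw [intervalIntegral.integral_neg, intervalIntegral.integral_comp_sub_left, sub_zero,
    ← intervalIntegral.integral_interval_sub_left hγ.integrable
      (hγ.integrable.mono_set (uIcc_subset_uIcc_left (by simp [uIcc_of_le hτ, hsub.1, hsub.2]))),
    hγ.eq τ ⟨hτ, le_rfl⟩, hγ.eq _ hsub]
  abel

def ActionReachable (d N : ℕ) (G : ℝ) (m : Fin N → ℝ) (h : ℝ) (x y : Config d N)
    (τ a : ℝ) : Prop :=
  ∃ γ g : ℝ → Config d N, ACOn d N γ g 0 τ ∧ γ 0 = x ∧ γ τ = y ∧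
    IntervalIntegrable (fun t => lagrangian d N G m (γ t) (g t) + h) volume 0 τ ∧
    ∫ t in (0:ℝ)..τ, (lagrangian d N G m (γ t) (g t) + h) ≤ a

variable {x y z : Config d N}

lemma ActionReachable.trans {τ₁ τ₂ a₁ a₂ : ℝ} (hτ₁ : 0 ≤ τ₁) (hτ₂ : 0 ≤ τ₂)
    (hxy : ActionReachable d N G m h x y τ₁ a₁) (hyz : ActionReachable d N G m h y z τ₂ a₂) :
    ActionReachable d N G m h x z (τ₁ + τ₂) (a₁ + a₂) := by
  obtain ⟨γ₁, g₁, hAC₁, hx, hy, hI₁, ha₁⟩ := hxy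
  obtain ⟨γ₂, g₂, hAC₂, hy', hz, hI₂, ha₂⟩ := hyz
  have hL : (fun t => lagrangian d N G m (glue τ₁ γ₁ γ₂ t) (glue τ₁ g₁ g₂ t) + h) =
      glue τ₁ (fun t => lagrangian d N G m (γ₁ t) (g₁ t) + h)
        (fun t => lagrangian d N G m (γ₂ t) (g₂ t) + h) := by
    funext t; unfold glue; split_ifs <;> rfl
  refine ⟨glue τ₁ γ₁ γ₂, glue τ₁ g₁ g₂, hAC₁.glue hτ₁ hτ₂ hAC₂ (hy.trans hy'.symm),
    by rw [glue_of_le γ₁ γ₂ hτ₁, hx], ?_, ?_, ?_⟩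
  · rcases hτ₂.eq_or_lt with h0 | hpos
    · rw [← h0, add_zero, glue_of_le γ₁ γ₂ le_rfl, hy, ← hy', h0, hz]
    · rw [glue_of_lt γ₁ γ₂ (by linarith), add_sub_cancel_left, hz]
  · rw [hL]; exact (hI₁.glue_left hτ₁).trans (hI₂.glue_right hτ₂)
  · rw [hL, integral_glue hτ₁ hτ₂ hI₁ hI₂]; exact add_le_add ha₁ ha₂

lemma ActionReachable.symm {τ a : ℝ} (hτ : 0 ≤ τ) (hxy : ActionReachable d N G m h x y τ a) :
    ActionReachable d N G m h y x τ a := by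
  obtain ⟨γ, g, hAC, hx, hy, hI, ha⟩ := hxy
  have hL : (fun t => lagrangian d N G m (γ (τ - t)) (-g (τ - t)) + h) =
      fun t => lagrangian d N G m (γ (τ - t)) (g (τ - t)) + h := by
    funext t; rw [lagrangian, lagrangian, kineticEnergy_neg]
  refine ⟨_, _, hAC.reverse hτ, by rw [sub_zero, hy], by rw [sub_self, hx], ?_, ?_⟩
  · rw [hL]; simpa using (hI.comp_sub_left τ).symm
  · rwa [hL, intervalIntegral.integral_comp_sub_left (fun t => lagrangian d N G m (γ t) (g t) + h),
      sub_self, sub_zero]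

lemma integral_lagrangian_add_nonneg (hG : 0 ≤ G) (hm : ∀ i, 0 ≤ m i) (hh : 0 ≤ h)
    (γ g : ℝ → Config d N) {τ : ℝ} (hτ : 0 ≤ τ) :
    0 ≤ ∫ t in (0:ℝ)..τ, (lagrangian d N G m (γ t) (g t) + h) :=
  intervalIntegral.integral_nonneg hτ fun _ _ => add_nonneg (lagrangian_nonneg hG hm _ _) hh

lemma phiFree_le_of_actionReachable (hG : 0 ≤ G) (hm : ∀ i, 0 ≤ m i) (hh : 0 ≤ h) {τ a : ℝ}
    (hτ : 0 < τ) (hxy : ActionReachable d N G m h x y τ a) : phiFree d N G m h x y ≤ a := by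
  obtain ⟨γ, g, hAC, hx, hy, hI, ha⟩ := hxy
  calc phiFree d N G m h x y ≤ phiTimed d N G m h x y τ := by
        refine csInf_le ⟨0, ?_⟩ ⟨τ, hτ, rfl⟩
        rintro _ ⟨σ, hσ, rfl⟩
        exact Real.sInf_nonneg fun _ ⟨γ', g', _, _, _, _, hc⟩ =>
          hc ▸ integral_lagrangian_add_nonneg hG hm hh γ' g' hσ.le
    _ ≤ ∫ t in (0:ℝ)..τ, (lagrangian d N G m (γ t) (g t) + h) := by
        refine csInf_le ⟨0, ?_⟩ ⟨γ, g, hAC, hx, hy, hI, rfl⟩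
        rintro _ ⟨γ', g', _, _, _, _, rfl⟩
        exact integral_lagrangian_add_nonneg hG hm hh γ' g' hτ.le
    _ ≤ a := ha

end Reachable

section Paths

variable {d N : ℕ} {G h : ℝ} {m : Fin N → ℝ} (hG : 0 ≤ G) (hm : ∀ i, 0 ≤ m i) (hh : 0 ≤ h)
include hG hm hh

lemma actionReachable_of_lagrangian_le {γ g : ℝ → Config d N} {x y : Config d N} {τ : ℝ}
    (hτ : 0 ≤ τ) (hAC : ACOn d N γ g 0 τ) (hx : γ 0 = x) (hy : γ τ = y) (hγ : Measurable γ)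
    (hg : Measurable g) {M : ℝ → ℝ} (hM : IntervalIntegrable M volume 0 τ)
    (hle : ∀ t ∈ Ioc 0 τ, lagrangian d N G m (γ t) (g t) + h ≤ M t) :
    ActionReachable d N G m h x y τ (∫ t in (0:ℝ)..τ, M t) := by
  have hnonneg : ∀ t, 0 ≤ lagrangian d N G m (γ t) (g t) + h := fun t =>
    add_nonneg (lagrangian_nonneg hG hm _ _) hh
  have hI : IntervalIntegrable (fun t => lagrangian d N G m (γ t) (g t) + h) volume 0 τ := by
    refine hM.mono_fun' ((hγ.lagrangian hg).add_const h).aestronglyMeasurable ?_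
    rw [uIoc_of_le hτ]
    filter_upwards [ae_restrict_mem measurableSet_Ioc] with t ht
    rw [Real.norm_of_nonneg (hnonneg t)]
    exact hle t ht
  refine ⟨γ, g, hAC, hx, hy, hI, intervalIntegral.integral_mono_on_of_le_Ioo hτ hI hM
    fun t ht => hle t (Ioo_subset_Ioc_self ht)⟩

lemma actionReachable_segment {x y : Config d N} {τ : ℝ} (hτ : 0 < τ)
    (hspeed : ∀ i, ‖y i - x i‖ ≤ τ)
    (hsep : ∀ s ∈ Icc (0:ℝ) 1, ∀ i j, i ≠ j → 1 ≤ ‖(1 - s) • (x i - x j) + s • (y i - y j)‖) :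
    ActionReachable d N G m h x y τ (τ * ((∑ i, m i) / 2 + G * (∑ i, m i) ^ 2 + h)) := by
  have hAC : ACOn d N (fun t => x + (t / τ) • (y - x)) (fun _ => τ⁻¹ • (y - x)) 0 τ := by
    refine ⟨intervalIntegrable_const, fun t _ => ?_⟩
    rw [intervalIntegral.integral_const, sub_zero, zero_div, zero_smul, add_zero, smul_smul,
      div_eq_mul_inv]
  have hle : ∀ t ∈ Ioc 0 τ, lagrangian d N G m (x + (t / τ) • (y - x)) (τ⁻¹ • (y - x)) + h ≤
      (∑ i, m i) / 2 + G * (∑ i, m i) ^ 2 + h := by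
    intro t ht
    have hs : t / τ ∈ Icc (0:ℝ) 1 := ⟨div_nonneg ht.1.le hτ.le, (div_le_one hτ).2 ht.2⟩
    have hK := kineticEnergy_le (m := m) hm (v := τ⁻¹ • (y - x)) (V := 1) fun i => by
      rw [Pi.smul_apply, norm_smul, Real.norm_of_nonneg (inv_nonneg.2 hτ.le), Pi.sub_apply,
        inv_mul_le_iff₀ hτ, mul_one]
      exact hspeed i
    have hU := potentialEnergy_le (G := G) hG hm (x := x + (t / τ) • (y - x)) one_pos
      fun i j hij => by
        convert hsep _ hs i j hij using 2
        simp only [Pi.add_apply, Pi.smul_apply, Pi.sub_apply]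
        module
    rw [lagrangian]
    linarith [show (∑ i, m i) * 1 ^ 2 / 2 = (∑ i, m i) / 2 by ring,
      show G * (∑ i, m i) ^ 2 / 1 = G * (∑ i, m i) ^ 2 by ring]
  have := actionReachable_of_lagrangian_le (x := x) (y := y) hG hm hh hτ.le hAC (by simp)
    (by simp [hτ.ne']) (by fun_prop) measurable_const intervalIntegrable_const hle
  rwa [intervalIntegral.integral_const, sub_zero, smul_eq_mul] at this

end Paths

section Spread

lemma intervalIntegrable_div_rpow {r T : ℝ} (hr : -1 < r) (hT : T ≠ 0) (a b : ℝ) :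
    IntervalIntegrable (fun t => (t / T) ^ r) volume a b := by
  simpa [div_eq_mul_inv, mul_div_assoc, hT] using
    (intervalIntegral.intervalIntegrable_rpow' (a := a / T) (b := b / T) hr).comp_mul_right
      (c := T⁻¹)

lemma integral_div_rpow {r T : ℝ} (hr : -1 < r) (hT : T ≠ 0) (b : ℝ) :
    ∫ t in (0:ℝ)..b, (t / T) ^ r = T * (b / T) ^ (r + 1) / (r + 1) := by
  rw [intervalIntegral.integral_comp_div (fun t => t ^ r) hT, integral_rpow (Or.inl hr), zero_div,
    Real.zero_rpow (by linarith), sub_zero, smul_eq_mul, mul_div_assoc]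

variable {d N : ℕ} {G h : ℝ} {m : Fin N → ℝ} (hG : 0 ≤ G) (hm : ∀ i, 0 ≤ m i) (hh : 0 ≤ h)
  {x : Config d N} {e : EuclideanSpace ℝ (Fin d)} (he : ‖e‖ = 1) {p : Fin N → ℝ} {c R : ℝ}
  (hp : ∀ i, |p i| ≤ c) (hR : 1 ≤ R)
  (hsep : ∀ i j, i ≠ j → ∀ l : ℝ, 0 ≤ l → l ≤ ‖x i - x j + (l * (p i - p j)) • e‖)
include hG hm hh he hp hR hsep

lemma lagrangian_spread_le {σ : ℝ} (hσ : 0 < σ) (hσ1 : σ ≤ 1) :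
    lagrangian d N G m (x + (R * σ ^ (2 / 3 : ℝ)) • fun i => p i • e)
        ((2 / 3 * σ ^ (-1 / 3 : ℝ)) • fun i => p i • e) + h ≤
      ((∑ i, m i) * c ^ 2 / 2 + G * (∑ i, m i) ^ 2 + h) * σ ^ (-2 / 3 : ℝ) := by
  set ρ := σ ^ (2 / 3 : ℝ)
  have hρ : 0 < ρ := Real.rpow_pos_of_pos hσ _
  have hρ1 : ρ ≤ 1 := Real.rpow_le_one hσ.le hσ1 (by norm_num)
  have hω : (σ ^ (-1 / 3 : ℝ)) ^ 2 = ρ⁻¹ := by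
    rw [← Real.rpow_natCast, ← Real.rpow_mul hσ.le, ← Real.rpow_neg hσ.le]; norm_num
  have hω0 : 0 ≤ σ ^ (-1 / 3 : ℝ) := Real.rpow_nonneg hσ.le _
  have hT := kineticEnergy_le hm (v := (2 / 3 * σ ^ (-1 / 3 : ℝ)) • fun i => p i • e)
    (V := c * σ ^ (-1 / 3 : ℝ)) fun i => by
      simp only [Pi.smul_apply, smul_smul, norm_smul, he, mul_one, Real.norm_eq_abs]
      rw [abs_mul, abs_of_nonneg (by positivity), mul_comm]
      exact mul_le_mul (hp i) (by linarith) (by positivity) ((abs_nonneg _).trans (hp i))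
  have hU := potentialEnergy_le (G := G) hG hm (x := x + (R * ρ) • fun i => p i • e) hρ
    fun i j hij => by
      calc ρ ≤ R * ρ := le_mul_of_one_le_left hρ.le hR
        _ ≤ _ := hsep i j hij (R * ρ) (by positivity)
        _ = _ := by
          congr 1
          simp only [Pi.add_apply, Pi.smul_apply, smul_smul]
          module
  have hh' : h ≤ h * ρ⁻¹ := le_mul_of_one_le_right hh ((one_le_inv₀ hρ).2 hρ1)
  rw [mul_pow, hω] at hT
  rw [lagrangian, show σ ^ (-2 / 3 : ℝ) = ρ⁻¹ by rw [← Real.rpow_neg hσ.le]; norm_num]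
  linarith [show G * (∑ i, m i) ^ 2 / ρ = G * (∑ i, m i) ^ 2 * ρ⁻¹ from div_eq_mul_inv _ _]

lemma actionReachable_spread :
    ActionReachable d N G m h x (fun i => x i + (R * p i) • e) R
      (3 * R * ((∑ i, m i) * c ^ 2 / 2 + G * (∑ i, m i) ^ 2 + h)) := by
  set V : Config d N := fun i => p i • e
  have hR0 : 0 < R := by linarith
  have hAC : ACOn d N (fun t => x + (R * (t / R) ^ (2 / 3 : ℝ)) • V)
      (fun t => (2 / 3 * (t / R) ^ (-1 / 3 : ℝ)) • V) 0 R := by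
    refine ⟨((intervalIntegrable_div_rpow (by norm_num) hR0.ne' 0 R).const_mul _).smul_continuousOn
      continuousOn_const, fun t _ => ?_⟩
    rw [intervalIntegral.integral_smul_const, intervalIntegral.integral_const_mul,
      integral_div_rpow (by norm_num) hR0.ne', zero_div, Real.zero_rpow (by norm_num)]
    norm_num
    module
  have := actionReachable_of_lagrangian_le (x := x) (y := fun i => x i + (R * p i) • e) hG hm hh
    hR0.le hAC (by simp) (by funext i; simp [div_self hR0.ne', V, smul_smul]) (by fun_prop)
    (by fun_prop)
    ((intervalIntegrable_div_rpow (by norm_num) hR0.ne' 0 R).const_mul _)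
    fun t ht => lagrangian_spread_le hG hm hh he hp hR hsep (div_pos ht.1 hR0)
      ((div_le_one hR0).2 ht.2)
  convert this using 1
  rw [intervalIntegral.integral_const_mul, integral_div_rpow (by norm_num) hR0.ne',
    div_self hR0.ne', Real.one_rpow]
  ring

end Spread

section Construction

variable {d N : ℕ}

lemma abs_apply_le_norm (v : EuclideanSpace ℝ (Fin d)) (k : Fin d) : |v k| ≤ ‖v‖ := by
  simpa using PiLp.norm_apply_le v k

noncomputable def rankWeight (u : Fin N → ℝ) (i : Fin N) : ℝ := ((Tuple.sort u).symm i : ℕ)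

lemma rankWeight_nonneg (u : Fin N → ℝ) (i : Fin N) : 0 ≤ rankWeight u i := Nat.cast_nonneg _

lemma rankWeight_le (u : Fin N → ℝ) (i : Fin N) : rankWeight u i ≤ N :=
  Nat.cast_le.2 ((Tuple.sort u).symm i).isLt.le

lemma le_abs_add_mul_rankWeight_sub (u : Fin N → ℝ) {i j : Fin N} (hij : i ≠ j) {l : ℝ}
    (hl : 0 ≤ l) : l ≤ |u i - u j + l * (rankWeight u i - rankWeight u j)| := by
  have key : ∀ a b : Fin N, ((Tuple.sort u).symm a : ℕ) < (Tuple.sort u).symm b →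
      u a ≤ u b ∧ rankWeight u a + 1 ≤ rankWeight u b := fun a b hab => by
    refine ⟨by simpa using Tuple.monotone_sort u hab.le, ?_⟩
    unfold rankWeight; exact_mod_cast hab
  have hne : ((Tuple.sort u).symm i : ℕ) ≠ (Tuple.sort u).symm j :=
    fun h => hij ((Tuple.sort u).symm.injective (Fin.ext h))
  rcases hne.lt_or_gt with hlt | hlt
  · obtain ⟨hu, hw⟩ := key i j hlt
    rw [abs_of_nonpos (by nlinarith)]; nlinarith
  · obtain ⟨hu, hw⟩ := key j i hlt
    rw [abs_of_nonneg (by nlinarith)]; nlinarith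

noncomputable def spreadAlong (x : Config d N) (k : Fin d) (R : ℝ) : Config d N :=
  fun i => x i + (R * rankWeight (fun j => x j k) i) • EuclideanSpace.single k 1

noncomputable def liftAlong (x : Config d N) (k : Fin d) (R : ℝ) : Config d N :=
  fun i => x i + EuclideanSpace.single k (R * (i : ℕ))

lemma spreadAlong_apply_of_ne (x : Config d N) {k k' : Fin d} (hk : k' ≠ k) (R : ℝ) (i : Fin N) :
    spreadAlong x k R i k' = x i k' := by
  simp [spreadAlong, hk]

lemma le_abs_spreadAlong_sub (x : Config d N) (k : Fin d) {R : ℝ} (hR : 0 ≤ R) {i j : Fin N}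
    (hij : i ≠ j) : R ≤ |spreadAlong x k R i k - spreadAlong x k R j k| := by
  convert le_abs_add_mul_rankWeight_sub (fun j => x j k) hij hR using 2
  simp [spreadAlong]; ring

lemma norm_spreadAlong_sub_le (x : Config d N) (k : Fin d) {R : ℝ} (hR : 0 ≤ R) (i : Fin N) :
    ‖spreadAlong x k R i - x i‖ ≤ R * N := by
  simp only [spreadAlong, add_sub_cancel_left, norm_smul, PiLp.norm_single, norm_one, mul_one,
    Real.norm_eq_abs, abs_mul, abs_of_nonneg hR, abs_of_nonneg (rankWeight_nonneg _ _)]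
  exact mul_le_mul_of_nonneg_left (rankWeight_le _ _) hR

lemma norm_spreadAlong_sub_spreadAlong_le (x y : Config d N) (k : Fin d) {R : ℝ} (hR : 0 ≤ R)
    (i : Fin N) : ‖spreadAlong y k R i - spreadAlong x k R i‖ ≤ ‖y i‖ + ‖x i‖ + 2 * (R * N) := by
  have e : spreadAlong y k R i - spreadAlong x k R i =
      (spreadAlong y k R i - y i) + (y i - x i) - (spreadAlong x k R i - x i) := by abel
  rw [e]
  linarith [norm_sub_le ((spreadAlong y k R i - y i) + (y i - x i)) (spreadAlong x k R i - x i),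
    norm_add_le (spreadAlong y k R i - y i) (y i - x i), norm_sub_le (y i) (x i),
    norm_spreadAlong_sub_le x k hR i, norm_spreadAlong_sub_le y k hR i]

end Construction

section Pieces

variable {d N : ℕ} {G h : ℝ} {m : Fin N → ℝ}

lemma one_le_norm_convexComb {u v : EuclideanSpace ℝ (Fin d)} {k : Fin d} {c r s : ℝ}
    (hc : r + 1 ≤ |c|) (hu : |u k - c| ≤ r) (hv : |v k - c| ≤ r) (hs : s ∈ Icc (0:ℝ) 1) :
    1 ≤ ‖(1 - s) • u + s • v‖ := by
  have hw : |(1 - s) * (u k - c) + s * (v k - c)| ≤ r := by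
    calc _ ≤ (1 - s) * |u k - c| + s * |v k - c| := by
          refine (abs_add_le _ _).trans_eq ?_
          rw [abs_mul, abs_mul, abs_of_nonneg (sub_nonneg.2 hs.2), abs_of_nonneg hs.1]
      _ ≤ (1 - s) * r + s * r := by
          gcongr
          · exact sub_nonneg.2 hs.2
          · exact hs.1
      _ = r := by ring
  have hk : ((1 - s) • u + s • v) k = c + ((1 - s) * (u k - c) + s * (v k - c)) := by
    simp only [PiLp.add_apply, PiLp.smul_apply, smul_eq_mul]; ring
  calc (1:ℝ) ≤ |c| - |(1 - s) * (u k - c) + s * (v k - c)| := by linarith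
    _ ≤ |((1 - s) • u + s • v) k| := by rw [hk]; exact abs_sub_abs_le_abs_add _ _
    _ ≤ _ := abs_apply_le_norm _ k

variable (hG : 0 ≤ G) (hm : ∀ i, 0 ≤ m i) (hh : 0 ≤ h)
include hG hm hh

lemma actionReachable_spreadAlong (x : Config d N) (k : Fin d) {R : ℝ} (hR : 1 ≤ R) :
    ActionReachable d N G m h x (spreadAlong x k R) R
      (3 * R * ((∑ i, m i) * N ^ 2 / 2 + G * (∑ i, m i) ^ 2 + h)) :=
  actionReachable_spread hG hm hh (by simp)
    (fun i => (abs_of_nonneg (rankWeight_nonneg _ i)).trans_le (rankWeight_le _ i)) hR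
    fun i j hij l hl => by
      calc l ≤ _ := le_abs_add_mul_rankWeight_sub (fun j => x j k) hij hl
        _ = |(x i - x j + (l * (rankWeight (fun j => x j k) i - rankWeight (fun j => x j k) j)) •
              EuclideanSpace.single k 1 : EuclideanSpace ℝ (Fin d)) k| := by simp
        _ ≤ _ := abs_apply_le_norm _ k

lemma actionReachable_liftAlong {z : Config d N} {k k' : Fin d} (hk : k' ≠ k) {R : ℝ}
    (hR : 0 < R) (hz : ∀ i j, i ≠ j → 1 ≤ |z i k' - z j k'|) :
    ActionReachable d N G m h z (liftAlong z k R) ((N + 1) * R)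
      ((N + 1) * R * ((∑ i, m i) / 2 + G * (∑ i, m i) ^ 2 + h)) := by
  refine actionReachable_segment hG hm hh (by positivity) (fun i => ?_) fun s hs i j hij => ?_
  · simp only [liftAlong, add_sub_cancel_left, PiLp.norm_single, Real.norm_eq_abs, abs_mul,
      abs_of_pos hR, Nat.abs_cast]
    have : ((i : ℕ) : ℝ) ≤ N + 1 := by exact_mod_cast (i.isLt.trans (Nat.lt_succ_self N)).le
    nlinarith
  · refine one_le_norm_convexComb (k := k') (c := z i k' - z j k') (r := 0)
      (by simpa using hz i j hij) (by simp) (by simp [liftAlong, hk]) hs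

lemma actionReachable_liftAlong_liftAlong {a b : Config d N} (k : Fin d) {R τ : ℝ} (hR : 0 ≤ R)
    (hτ : 0 < τ) (ha : ∀ i j, i ≠ j → |a i k - a j k| ≤ R - 1)
    (hb : ∀ i j, i ≠ j → |b i k - b j k| ≤ R - 1) (hspeed : ∀ i, ‖b i - a i‖ ≤ τ) :
    ActionReachable d N G m h (liftAlong a k R) (liftAlong b k R) τ
      (τ * ((∑ i, m i) / 2 + G * (∑ i, m i) ^ 2 + h)) := by
  refine actionReachable_segment hG hm hh hτ (fun i => ?_) fun s hs i j hij => ?_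
  · simpa [liftAlong] using hspeed i
  · have hgap : R ≤ |R * (((i : ℕ) : ℝ) - (j : ℕ))| := by
      have h1 : (1:ℤ) ≤ |((i : ℕ) : ℤ) - (j : ℕ)| :=
        Int.one_le_abs (sub_ne_zero.2 (by exact_mod_cast Fin.val_ne_of_ne hij))
      rw [abs_mul, abs_of_nonneg hR]
      exact le_mul_of_one_le_right hR (by exact_mod_cast h1)
    refine one_le_norm_convexComb (k := k) (c := R * (((i : ℕ) : ℝ) - (j : ℕ))) (r := R - 1)
      (by linarith) ?_ ?_ hs
    · convert ha i j hij using 2; simp [liftAlong]; ring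
    · convert hb i j hij using 2; simp [liftAlong]; ring

end Pieces

section UpperBound

variable {d N : ℕ} {G h : ℝ} {m : Fin N → ℝ}

lemma abs_apply_sub_le_sum_norm (x : Config d N) (k : Fin d) {i j : Fin N} (hij : i ≠ j) :
    |x i k - x j k| ≤ ∑ l, ‖x l‖ := by
  calc |x i k - x j k| ≤ ‖x i - x j‖ := by simpa using abs_apply_le_norm (x i - x j) k
    _ ≤ ‖x i‖ + ‖x j‖ := norm_sub_le _ _
    _ = ∑ l ∈ {i, j}, ‖x l‖ := (Finset.sum_pair (f := fun l => ‖x l‖) hij).symm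
    _ ≤ ∑ l, ‖x l‖ := Finset.sum_le_sum_of_subset_of_nonneg (Finset.subset_univ _)
        fun _ _ _ => norm_nonneg _

lemma norm_le_sum_norm (x : Config d N) (i : Fin N) : ‖x i‖ ≤ ∑ l, ‖x l‖ :=
  Finset.single_le_sum (f := fun l => ‖x l‖) (fun _ _ => norm_nonneg _) (Finset.mem_univ i)

theorem exists_phiFree_le_linear (hd : 2 ≤ d) (hG : 0 ≤ G) (hm : ∀ i, 0 ≤ m i) (hh : 0 ≤ h) :
    ∃ Λ, 0 ≤ Λ ∧ ∀ x y : Config d N,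
      phiFree d N G m h x y ≤ Λ * (1 + ∑ i, ‖x i‖ + ∑ i, ‖y i‖) := by
  set K₀ := (∑ i, m i) / 2 + G * (∑ i, m i) ^ 2 + h
  set K₁ := (∑ i, m i) * N ^ 2 / 2 + G * (∑ i, m i) ^ 2 + h
  have hM : 0 ≤ ∑ i, m i := Finset.sum_nonneg fun i _ => hm i
  refine ⟨6 * K₁ + (4 * N + 3) * K₀, by positivity, fun x y => ?_⟩
  set P := 1 + ∑ i, ‖x i‖ + ∑ i, ‖y i‖
  have hSx : 0 ≤ ∑ i, ‖x i‖ := Finset.sum_nonneg fun i _ => norm_nonneg _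
  have hSy : 0 ≤ ∑ i, ‖y i‖ := Finset.sum_nonneg fun i _ => norm_nonneg _
  have hP : 1 ≤ P := by linarith
  let k₁ : Fin d := ⟨0, by omega⟩
  let k₂ : Fin d := ⟨1, by omega⟩
  have hk : k₁ ≠ k₂ := by simp [k₁, k₂, Fin.ext_iff]
  have hcoord : ∀ z : Config d N, ∑ i, ‖z i‖ ≤ P - 1 → ∀ i j, i ≠ j →
      |spreadAlong z k₂ P i k₁ - spreadAlong z k₂ P j k₁| ≤ P - 1 := fun z hz i j hij => by
    rw [spreadAlong_apply_of_ne _ hk, spreadAlong_apply_of_ne _ hk]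
    exact (abs_apply_sub_le_sum_norm z k₁ hij).trans hz
  have hspeed : ∀ i, ‖spreadAlong y k₂ P i - spreadAlong x k₂ P i‖ ≤ (2 * N + 1) * P := fun i =>
    (norm_spreadAlong_sub_spreadAlong_le x y k₂ (by linarith) i).trans
      (by linarith [norm_le_sum_norm x i, norm_le_sum_norm y i])
  have hsep : ∀ z : Config d N, ∀ i j, i ≠ j →
      1 ≤ |spreadAlong z k₂ P i k₂ - spreadAlong z k₂ P j k₂| := fun z i j hij =>
    hP.trans (le_abs_spreadAlong_sub z k₂ (by linarith) hij)
  have h₁ := actionReachable_spreadAlong (m := m) hG hm hh x k₂ hP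
  have h₂ := actionReachable_liftAlong (m := m) hG hm hh hk.symm (R := P) (by linarith) (hsep x)
  have h₃ := actionReachable_liftAlong_liftAlong (m := m) hG hm hh k₁ (by linarith) (by positivity)
    (hcoord x (by linarith)) (hcoord y (by linarith)) hspeed
  have h₄ := (actionReachable_liftAlong (m := m) hG hm hh hk.symm (R := P) (by linarith)
    (hsep y)).symm (by positivity)
  have h₅ := (actionReachable_spreadAlong (m := m) hG hm hh y k₂ hP).symm (by linarith)
  have := (((h₁.trans (by linarith) (by positivity) h₂).trans (by positivity) (by positivity)
    h₃).trans (by positivity) (by positivity) h₄).trans (by positivity) (by linarith) h₅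
  exact (phiFree_le_of_actionReachable hG hm hh (by positivity) this).trans_eq (by ring)

end UpperBound

section LowerBound

variable {d N : ℕ} {G h : ℝ} {m : Fin N → ℝ}

lemma ACOn.intervalIntegrable_apply {γ g : ℝ → Config d N} {a b : ℝ} (hAC : ACOn d N γ g a b)
    (i : Fin N) : IntervalIntegrable (fun s => g s i) volume a b :=
  ⟨hAC.integrable.1.eval i, hAC.integrable.2.eval i⟩

lemma ACOn.norm_sub_le_integral {γ g : ℝ → Config d N} {t : ℝ} (hAC : ACOn d N γ g 0 t)
    (ht : 0 ≤ t) (i : Fin N) : ‖γ t i - γ 0 i‖ ≤ ∫ s in (0:ℝ)..t, ‖g s i‖ := by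
  have hI := hAC.integrable
  have : γ t i - γ 0 i = ∫ s in (0:ℝ)..t, g s i := by
    rw [hAC.eq t ⟨ht, le_rfl⟩, Pi.add_apply, add_sub_cancel_left,
      intervalIntegral.integral_of_le ht, intervalIntegral.integral_of_le ht,
      eval_integral (fun j => ((hI.1.eval j)))]
  rw [this]
  exact intervalIntegral.norm_integral_le_integral_norm ht

lemma sub_le_kineticEnergy (hm : ∀ i, 0 < m i) (μ : ℝ) (v : Config d N) :
    μ * ∑ i, ‖v i‖ - ∑ i, μ ^ 2 / (2 * m i) ≤ kineticEnergy d N m v := by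
  rw [kineticEnergy, Finset.mul_sum, Finset.mul_sum, ← Finset.sum_sub_distrib]
  refine Finset.sum_le_sum fun i _ => ?_
  have hmi := hm i
  have : 0 ≤ (m i * ‖v i‖ - μ) ^ 2 / (2 * m i) := by positivity
  have e : (m i * ‖v i‖ - μ) ^ 2 / (2 * m i) =
      1 / 2 * (m i * ‖v i‖ ^ 2) - (μ * ‖v i‖ - μ ^ 2 / (2 * m i)) := by
    field_simp; ring
  linarith

lemma sub_le_integral_lagrangian (hG : 0 ≤ G) (hm : ∀ i, 0 < m i) (hh : 0 ≤ h)
    {γ g : ℝ → Config d N} {t : ℝ} (ht : 0 ≤ t) (hAC : ACOn d N γ g 0 t)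
    (hI : IntervalIntegrable (fun s => lagrangian d N G m (γ s) (g s) + h) volume 0 t)
    {μ : ℝ} (hμ : 0 ≤ μ) :
    μ * ∑ i, ‖γ t i - γ 0 i‖ - (∑ i, μ ^ 2 / (2 * m i)) * t ≤
      ∫ s in (0:ℝ)..t, (lagrangian d N G m (γ s) (g s) + h) := by
  have hnorm : ∀ i, IntervalIntegrable (fun s => ‖g s i‖) volume 0 t := fun i =>
    (hAC.intervalIntegrable_apply i).norm
  have hsum : IntervalIntegrable (fun s => μ * ∑ i, ‖g s i‖) volume 0 t := by
    convert (IntervalIntegrable.sum Finset.univ fun i _ => hnorm i).const_mul μ using 2 with s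
    simp
  calc μ * ∑ i, ‖γ t i - γ 0 i‖ - (∑ i, μ ^ 2 / (2 * m i)) * t
      ≤ μ * ∑ i, (∫ s in (0:ℝ)..t, ‖g s i‖) - (∑ i, μ ^ 2 / (2 * m i)) * t :=
        sub_le_sub_right (mul_le_mul_of_nonneg_left
          (Finset.sum_le_sum fun i _ => hAC.norm_sub_le_integral ht i) hμ) _
    _ = ∫ s in (0:ℝ)..t, (μ * ∑ i, ‖g s i‖ - ∑ i, μ ^ 2 / (2 * m i)) := by
        rw [intervalIntegral.integral_sub hsum intervalIntegrable_const,
          intervalIntegral.integral_const_mul, intervalIntegral.integral_finsetSum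
          fun i _ => hnorm i, intervalIntegral.integral_const, smul_eq_mul, sub_zero]
        ring
    _ ≤ _ := intervalIntegral.integral_mono_on ht (hsum.sub intervalIntegrable_const) hI
        fun s _ => by
          have := sub_le_kineticEnergy hm μ (g s)
          have := potentialEnergy_nonneg hG (fun i => (hm i).le) (γ s)
          rw [lagrangian]
          linarith

end LowerBound

theorem IsFTM.exists_sum_norm_le_linear {d N : ℕ} {G h : ℝ} {m : Fin N → ℝ} (hd : 2 ≤ d)
    (hG : 0 ≤ G) (hm : ∀ i, 0 < m i) (hh : 0 ≤ h) {γ g : ℝ → Config d N}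
    (hγ : IsFTM d N G m h γ g) :
    ∃ A B : ℝ, ∀ t, 0 < t → ∑ i, ‖γ t i‖ ≤ A + B * t := by
  obtain ⟨Λ, hΛ, hφ⟩ := exists_phiFree_le_linear hd hG (fun i => (hm i).le) hh
  set S := ∑ i, ‖γ 0 i‖
  refine ⟨Λ * (1 + S) + (Λ + 1) * S, ∑ i, (Λ + 1) ^ 2 / (2 * m i), fun t ht => ?_⟩
  obtain ⟨hAC, hI, heq⟩ := hγ 0 le_rfl t ht
  rw [zero_add] at hAC hI heq
  have hlow := sub_le_integral_lagrangian hG hm hh ht.le hAC hI (μ := Λ + 1) (by linarith)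
  have hup := hφ (γ 0) (γ t)
  have hW : ∑ i, ‖γ t i‖ - S ≤ ∑ i, ‖γ t i - γ 0 i‖ := by
    rw [sub_le_iff_le_add, ← Finset.sum_add_distrib]
    exact Finset.sum_le_sum fun i _ => norm_le_norm_sub_add _ _
  have := mul_le_mul_of_nonneg_left hW (by linarith : 0 ≤ Λ + 1)
  rw [heq] at hlow
  linarith

theorem free_time_minimizer_not_superhyperbolic_general
    (d N : ℕ) (hd : 2 ≤ d) (G : ℝ) (hG : 0 < G)
    (m : Fin N → ℝ) (hm : ∀ i, 0 < m i) (h : ℝ) (hh : 0 < h)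
    (γ g : ℝ → Config d N) (hγ : IsFTM d N G m h γ g) :
    ∃ C t₀ : ℝ, ∀ t ≥ t₀, ∀ i j : Fin N, ‖γ t i - γ t j‖ ≤ C * t := by
  obtain ⟨A, B, hAB⟩ := hγ.exists_sum_norm_le_linear hd hG.le hm hh.le
  refine ⟨2 * (|A| + B), 1, fun t ht i j => ?_⟩
  calc ‖γ t i - γ t j‖ ≤ ‖γ t i‖ + ‖γ t j‖ := norm_sub_le _ _
    _ ≤ 2 * ∑ k, ‖γ t k‖ := by linarith [norm_le_sum_norm (γ t) i, norm_le_sum_norm (γ t) j]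
    _ ≤ 2 * (A + B * t) := by linarith [hAB t (by linarith)]
    _ ≤ 2 * (|A| + B) * t := by nlinarith [le_abs_self A, abs_nonneg A]

/-- for `d ≥ 2` and `h > 0`, no `h`-free time minimizer is superhyperbolic:
`limsup_{t→∞} R(t)/t < ∞`, i.e. eventually `r_ij(t) ≤ C t` for all pairs. -/
theorem free_time_minimizer_not_superhyperbolic
    (d N : ℕ) (hd : 2 ≤ d) (hN : 2 ≤ N) (G : ℝ) (hG : 0 < G)
    (m : Fin N → ℝ) (hm : ∀ i, 0 < m i) (h : ℝ) (hh : 0 < h)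
    (γ g : ℝ → Config d N) (hγ : IsFTM d N G m h γ g) :
    ∃ C t₀ : ℝ, ∀ t ≥ t₀, ∀ i j : Fin N, ‖γ t i - γ t j‖ ≤ C * t :=
  free_time_minimizer_not_superhyperbolic_general d N hd G hG m hm h hh γ g hγ
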